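/- Let G be a finite connected graph and d a positive integer such that (1) G contains no copy of the complete bipartite graph K_{d,d+1} as a subgraph, and (2) d cops have a lonely winning strategy in the game of Cops and Robbers on G. Then c_H(G) ≤ d. -/

import Mathlib

/-- A single move in (reflexive) Cops and Robbers: stay put or move to an adjacent vertex. -/
def CRStep {V : Type*} (G : SimpleGraph V) (u v : V) : Prop := u = v ∨ G.Adj u v

/-- The list of the robber's first `n` positions. -/
def robberHist {V : Type*} (r : ℕ → V) (n : ℕ) : List V := (List.range n).map r

/-- `k` cops have a winning strategy in (perfect-information) Cops and Robbers on `G`.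
A cop strategy `F` assigns to every history of robber positions the positions of the `k` cops;
`F []` is the initial placement of the cops, chosen before the robber picks a start vertex,
and consecutive cop positions must be legal moves.  Given a robber trajectory `r`
(every consecutive pair a legal move), the positions of the cops after their `n`-th move are
`F (robberHist r n)`.  The cops win if at some moment (after a cop move or after a robber
move) some cop occupies the robber's current vertex. -/
def CopsWin {V : Type*} (G : SimpleGraph V) (k : ℕ) : Prop :=
  ∃ F : List V → Fin k → V,
    (∀ l x i, CRStep G (F l i) (F (l ++ [x]) i)) ∧
    ∀ r : ℕ → V, (∀ n, CRStep G (r n) (r (n + 1))) →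
      ∃ n, ∃ i, F (robberHist r n) i = r n ∨ F (robberHist r (n + 1)) i = r n

/-- The cop number of `G`: the least number of cops having a winning strategy. -/
noncomputable def copNumber {V : Type*} (G : SimpleGraph V) : ℕ := sInf {k | CopsWin G k}

open Classical in
/-- The first `n` observations made by hyperopic cops using strategy `F` against the robber
trajectory `r`: after the robber's `n`-th move, the cops (positioned at `F` applied to the
previous observations) see the robber (observation `some (r n)`) unless the robber is
adjacent to every cop (observation `none`). -/
noncomputable def hObsList {V : Type*} (G : SimpleGraph V) {k : ℕ}
    (F : List (Option V) → Fin k → V) (r : ℕ → V) : ℕ → List (Option V)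
  | 0 => []
  | n + 1 =>
      hObsList G F r n ++
        [if ∀ i, G.Adj (F (hObsList G F r n) i) (r n) then none else some (r n)]

/-- `k` cops have a winning strategy in Hyperopic Cops and Robbers on `G`: a strategy
`F`, depending only on the history of observations (the robber being invisible exactly
when adjacent to every cop), which guarantees capture against every robber trajectory. -/
def HCopsWin {V : Type*} (G : SimpleGraph V) (k : ℕ) : Prop :=
  ∃ F : List (Option V) → Fin k → V,
    (∀ l o i, CRStep G (F l i) (F (l ++ [o]) i)) ∧
    ∀ r : ℕ → V, (∀ n, CRStep G (r n) (r (n + 1))) →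
      ∃ n, ∃ i, F (hObsList G F r n) i = r n ∨ F (hObsList G F r (n + 1)) i = r n

/-- The hyperopic cop number of `G`: the least number of cops having a winning strategy
in Hyperopic Cops and Robbers. -/
noncomputable def hyperopicCopNumber {V : Type*} (G : SimpleGraph V) : ℕ :=
  sInf {k | HCopsWin G k}

/-- `k` cops have a *lonely* winning strategy in Cops and Robbers on `G`: a winning
strategy such that in every play consistent with it, no two cops ever occupy the same
vertex at the end of a round (including the initial placement). -/
def LonelyCopsWin {V : Type*} (G : SimpleGraph V) (k : ℕ) : Prop :=
  ∃ F : List V → Fin k → V,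
    (∀ l x i, CRStep G (F l i) (F (l ++ [x]) i)) ∧
    ∀ r : ℕ → V, (∀ n, CRStep G (r n) (r (n + 1))) →
      (∀ n, Function.Injective fun i => F (robberHist r n) i) ∧
      ∃ n, ∃ i, F (robberHist r n) i = r n ∨ F (robberHist r (n + 1)) i = r n

/-- `H` is a minor of `G`: there are pairwise-disjoint nonempty connected branch sets in
`G`, indexed by the vertices of `H`, with an edge of `G` between the branch sets of every
pair of adjacent vertices of `H`. -/
def HasMinor {V W : Type*} (G : SimpleGraph V) (H : SimpleGraph W) : Prop :=
  ∃ B : W → Set V,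
    (∀ w, (B w).Nonempty) ∧
    (∀ w, (G.induce (B w)).Connected) ∧
    (Pairwise fun w w' => Disjoint (B w) (B w')) ∧
    ∀ ⦃w w'⦄, H.Adj w w' → ∃ u ∈ B w, ∃ v ∈ B w', G.Adj u v

/-- A graph is outerplanar iff it has no `K₄` minor and no `K_{2,3}` minor
(the minor-theoretic characterization of outerplanarity). -/
def Outerplanar {V : Type*} (G : SimpleGraph V) : Prop :=
  ¬ HasMinor G (⊤ : SimpleGraph (Fin 4)) ∧
    ¬ HasMinor G (completeBipartiteGraph (Fin 2) (Fin 3))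

/-- A graph is planar iff it has no `K₅` minor and no `K_{3,3}` minor
(Wagner's characterization of planarity). -/
def Planar {V : Type*} (G : SimpleGraph V) : Prop :=
  ¬ HasMinor G (⊤ : SimpleGraph (Fin 5)) ∧
    ¬ HasMinor G (completeBipartiteGraph (Fin 3) (Fin 3))

/-! While the robber is visible the cops follow the lonely strategy, so the robber is caught or
stays visible forever unless, at some round, it is adjacent to all `d` cops, which stand on `d`
distinct vertices. Since `G` is `K_{d,d+1}`-free, the common neighbourhood of these vertices has
at most `d` elements, and in their next move the `d` cops occupy all of them. -/

namespace SimpleGraph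

variable {V : Type*} (G : SimpleGraph V)

def commonNeighborSet {ι : Type*} (c : ι → V) : Set V := {v | ∀ i, G.Adj (c i) v}

def BicliqueFree (a b : ℕ) : Prop :=
  ¬ ∃ X Y : Finset V, Disjoint X Y ∧ X.card = a ∧ Y.card = b ∧
    ∀ x ∈ X, ∀ y ∈ Y, G.Adj x y

variable {G}

theorem BicliqueFree.card_lt_of_subset_commonNeighborSet {a b : ℕ} (h : G.BicliqueFree a b)
    {c : Fin a → V} (hc : c.Injective) {s : Finset V} (hs : ↑s ⊆ G.commonNeighborSet c) :
    s.card < b := by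
  classical
  by_contra! hbs
  obtain ⟨Y, hYs, hY⟩ := Finset.exists_subset_card_eq hbs
  refine h ⟨Finset.univ.image c, Y, ?_, by simp [Finset.card_image_of_injective _ hc], hY, ?_⟩
  · rw [Finset.disjoint_left]
    rintro _ hx hxY
    obtain ⟨i, -, rfl⟩ := Finset.mem_image.mp hx
    exact G.irrefl (hs (hYs hxY) i)
  · rintro _ hx y hy
    obtain ⟨i, -, rfl⟩ := Finset.mem_image.mp hx
    exact hs (hYs hy) i

theorem BicliqueFree.finite_commonNeighborSet {a b : ℕ} (h : G.BicliqueFree a b)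
    {c : Fin a → V} (hc : c.Injective) : (G.commonNeighborSet c).Finite :=
  Set.not_infinite.mp fun hinf => by
    obtain ⟨s, hs, hcard⟩ := hinf.exists_subset_card_eq b
    exact (h.card_lt_of_subset_commonNeighborSet hc hs).ne hcard

variable (G)

open Classical in
/-- Cops at `c` spread over the common neighbourhood of their positions, as far as their number
allows; the remaining cops stay put. -/
noncomputable def pounce {k : ℕ} (c : Fin k → V) : Fin k → V :=
  if h : (G.commonNeighborSet c).Finite then fun i => h.toFinset.toList.getD i (c i) else c

theorem crStep_pounce {k : ℕ} (c : Fin k → V) (i : Fin k) : CRStep G (c i) (G.pounce c i) := by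
  unfold pounce
  split_ifs with h
  · beta_reduce
    by_cases hi : (i : ℕ) < h.toFinset.toList.length
    · right
      rw [List.getD_eq_getElem _ _ hi]
      have hmem := Finset.mem_toList.mp (List.getElem_mem hi)
      exact (h.mem_toFinset.mp hmem) i
    · left
      exact (List.getD_eq_default _ _ (not_lt.mp hi)).symm
  · exact Or.inl rfl

variable {G}

theorem BicliqueFree.exists_pounce_eq {k : ℕ} (h : G.BicliqueFree k (k + 1)) {c : Fin k → V}
    (hc : c.Injective) {v : V} (hv : v ∈ G.commonNeighborSet c) : ∃ i, G.pounce c i = v := by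
  have hfin := h.finite_commonNeighborSet hc
  obtain ⟨j, hj, rfl⟩ :=
    List.mem_iff_getElem.mp (Finset.mem_toList.mpr (hfin.mem_toFinset.mpr hv))
  have hjk : j < k := by
    have := h.card_lt_of_subset_commonNeighborSet hc hfin.coe_toFinset.subset
    rw [Finset.length_toList] at hj
    omega
  refine ⟨⟨j, hjk⟩, ?_⟩
  simp only [pounce, dif_pos hfin]
  exact List.getD_eq_getElem _ _ hj

end SimpleGraph

theorem List.eq_map_some_or_eq_map_some_append_none_cons {α : Type*} (l : List (Option α)) :
    (∃ l' : List α, l = l'.map some) ∨ ∃ (l' : List α) (t : List (Option α)),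
      l = l'.map some ++ none :: t := by
  induction l with
  | nil => exact Or.inl ⟨[], rfl⟩
  | cons o l ih =>
    cases o with
    | none => exact Or.inr ⟨[], l, rfl⟩
    | some x =>
      rcases ih with ⟨l', rfl⟩ | ⟨l', t, rfl⟩
      · exact Or.inl ⟨x :: l', rfl⟩
      · exact Or.inr ⟨x :: l', t, rfl⟩

theorem List.reduceOption_map_some {α : Type*} (l : List α) : (l.map some).reduceOption = l := by
  induction l <;> simp_all [List.reduceOption_cons_of_some]

section Game

variable {V : Type*} {G : SimpleGraph V} {k : ℕ}

theorem CRStep.refl (u : V) : CRStep G u u := Or.inl rfl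

theorem robberHist_succ (r : ℕ → V) (n : ℕ) :
    robberHist r (n + 1) = robberHist r n ++ [r n] := by
  simp [robberHist, List.range_succ]

theorem hObsList_eq_map_robberHist (F : List (Option V) → Fin k → V) (r : ℕ → V) (n : ℕ)
    (hvis : ∀ m < n, ¬ ∀ i, G.Adj (F (hObsList G F r m) i) (r m)) :
    hObsList G F r n = (robberHist r n).map some := by
  induction n with
  | zero => rfl
  | succ n ih =>
    rw [hObsList, if_neg (hvis n n.lt_succ_self), ih fun m hm => hvis m (hm.trans n.lt_succ_self),
      robberHist_succ, List.map_append, List.map_singleton]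

/-- The hyperopic cops follow `F` as long as they have always seen the robber; after the first
observation `none` they make the move `P` from where they stood, and then never move again. -/
noncomputable def hyperopicStrategy (F : List V → Fin k → V) (P : (Fin k → V) → Fin k → V)
    (l : List (Option V)) : Fin k → V :=
  if l.all Option.isSome then F l.reduceOption
  else P (F (l.takeWhile Option.isSome).reduceOption)

variable (F : List V → Fin k → V) (P : (Fin k → V) → Fin k → V)

theorem hyperopicStrategy_map_some (l : List V) : hyperopicStrategy F P (l.map some) = F l := by
  simp [hyperopicStrategy, List.reduceOption_map_some]

theorem hyperopicStrategy_map_some_append_none_cons (l : List V) (t : List (Option V)) :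
    hyperopicStrategy F P (l.map some ++ none :: t) = P (F l) := by
  have hpre : (l.map some ++ none :: t).takeWhile Option.isSome = l.map some := by
    rw [List.takeWhile_append_of_pos (by simp)]
    simp
  simp [hyperopicStrategy, hpre, List.reduceOption_map_some]

theorem crStep_hyperopicStrategy (hF : ∀ l x i, CRStep G (F l i) (F (l ++ [x]) i))
    (hP : ∀ c i, CRStep G (c i) (P c i)) (l : List (Option V)) (o : Option V) (i : Fin k) :
    CRStep G (hyperopicStrategy F P l i) (hyperopicStrategy F P (l ++ [o]) i) := by
  rcases l.eq_map_some_or_eq_map_some_append_none_cons with ⟨l, rfl⟩ | ⟨l, t, rfl⟩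
  · cases o with
    | some x =>
      rw [← List.map_singleton, ← List.map_append, hyperopicStrategy_map_some,
        hyperopicStrategy_map_some]
      exact hF l x i
    | none =>
      rw [hyperopicStrategy_map_some, hyperopicStrategy_map_some_append_none_cons]
      exact hP _ i
  · rw [List.append_assoc, List.cons_append, hyperopicStrategy_map_some_append_none_cons,
      hyperopicStrategy_map_some_append_none_cons]
    exact CRStep.refl _

end Game

theorem LonelyCopsWin.hCopsWin {V : Type*} {G : SimpleGraph V} {k : ℕ} (hF : LonelyCopsWin G k)
    (P : (Fin k → V) → Fin k → V) (hPstep : ∀ c i, CRStep G (c i) (P c i))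
    (hPcover : ∀ c : Fin k → V, c.Injective →
      ∀ v ∈ G.commonNeighborSet c, ∃ i, P c i = v) :
    HCopsWin G k := by
  obtain ⟨F, hFstep, hFwin⟩ := hF
  refine ⟨hyperopicStrategy F P, crStep_hyperopicStrategy F P hFstep hPstep, fun r hr => ?_⟩
  obtain ⟨hinj, hwin⟩ := hFwin r hr
  set obs := hObsList G (hyperopicStrategy F P) r with hobs_def
  by_cases hinvisible : ∃ m, ∀ i, G.Adj (hyperopicStrategy F P (obs m) i) (r m)
  · classical
    let m := Nat.find hinvisible
    have hobs : obs m = (robberHist r m).map some :=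
      hObsList_eq_map_robberHist _ r m fun _ => Nat.find_min hinvisible
    have hcops : hyperopicStrategy F P (obs m) = F (robberHist r m) := by
      rw [hobs, hyperopicStrategy_map_some]
    have hadj := Nat.find_spec hinvisible
    rw [hcops] at hadj
    obtain ⟨i, hi⟩ := hPcover _ (hinj m) (r m) hadj
    refine ⟨m, i, Or.inr ?_⟩
    rw [hobs_def, hObsList, ← hobs_def, hcops, if_pos hadj, hobs,
      hyperopicStrategy_map_some_append_none_cons, hi]
  · rw [not_exists] at hinvisible
    have hobs (n : ℕ) : obs n = (robberHist r n).map some :=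
      hObsList_eq_map_robberHist _ r n fun m _ => hinvisible m
    simpa only [hobs, hyperopicStrategy_map_some] using hwin

theorem hyperopicCopNumber_le_of_lonely_general {V : Type*}
    (G : SimpleGraph V) (d : ℕ)
    (hfree : ¬ ∃ X Y : Finset V, Disjoint X Y ∧ X.card = d ∧ Y.card = d + 1 ∧
      ∀ x ∈ X, ∀ y ∈ Y, G.Adj x y)
    (hlonely : LonelyCopsWin G d) :
    hyperopicCopNumber G ≤ d :=
  have hfree : G.BicliqueFree d (d + 1) := hfree
  Nat.sInf_le <| hlonely.hCopsWin G.pounce G.crStep_pounce fun _ hc _ hv =>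
    hfree.exists_pounce_eq hc hv

/-- Let `G` be a finite connected graph and `d` a positive integer such
that (1) `G` contains no copy of the complete bipartite graph `K_{d,d+1}`, and (2) `d`
cops have a lonely winning strategy in Cops and Robbers on `G`. Then `c_H(G) ≤ d`. -/
theorem hyperopicCopNumber_le_of_lonely {V : Type*} [Fintype V]
    (G : SimpleGraph V) (hG : G.Connected) (d : ℕ) (hd : 0 < d)
    (hfree : ¬ ∃ X Y : Finset V, Disjoint X Y ∧ X.card = d ∧ Y.card = d + 1 ∧
      ∀ x ∈ X, ∀ y ∈ Y, G.Adj x y)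
    (hlonely : LonelyCopsWin G d) :
    hyperopicCopNumber G ≤ d :=
  hyperopicCopNumber_le_of_lonely_general G d hfree hlonely
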